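/- Let G be a compact topological group, B a complete Hausdorff topological field of characteristic zero, K a subfield, and V a finite-dimensional K-vector space. Give V(B ⊗_K R) := V ⊗_K (B ⊗_K R) the inductive limit topology as a B-vector space. Then for any K-algebra R and any n ≥ 0, the natural map Cⁿ(G, V ⊗_K B) ⊗_K R → Cⁿ(G, V ⊗_K B ⊗_K R) from continuous cochains with values in V ⊗ B, tensored with R, to continuous cochains with values in V ⊗ B ⊗ R, is a bijection. -/

import Mathlib

/-! A compact subset of a vector space with the inductive-limit topology lies in a
finite-dimensional subspace: a linearly independent subset of it meets every finite-dimensional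
subspace in a finite set, so it is closed and discrete, hence finite. Hence a continuous cochain
`f` with values in `B ⊗ (V ⊗ R)` takes values in a finite-dimensional `B`-subspace, which only
involves finitely many vectors `b i` of a `K`-basis of `R`; the coefficients `c i` of `f` are
`B`-linear in `f`, hence continuous, and `f` is the image of `∑ c i ⊗ b i`. Injectivity holds on
all of `Cⁿ(G, V ⊗ B) ⊗ R`, by expanding in the same basis. -/

open scoped TensorProduct

/-- The canonical topology on a finite-dimensional vector space over a
topological field. -/
noncomputable def canonicalFDTopology (B V : Type*) [Field B] [TopologicalSpace B]
    [AddCommGroup V] [Module B V] [FiniteDimensional B V] : TopologicalSpace V :=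
  TopologicalSpace.induced (Module.finBasis B V).equivFun Pi.topologicalSpace

/-- The inductive limit topology on a `B`-vector space coming from its
finite-dimensional subspaces. -/
noncomputable def indLimTopology (B R : Type*) [Field B] [TopologicalSpace B]
    [AddCommGroup R] [Module B R] : TopologicalSpace R :=
  ⨆ (V : Submodule B R) (h : FiniteDimensional B V),
    TopologicalSpace.coinduced (Subtype.val : V → R) (@canonicalFDTopology B V _ _ _ _ h)

/-- Given a bilinear map `μ : M → N → P`, the induced linear map
`(X → M) ⊗ N → (X → P)`, `c ⊗ r ↦ (x ↦ μ (c x) r)`. -/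
noncomputable def pointwiseTensorMap (K : Type*) [CommRing K] (X : Type*)
    {M N P : Type*} [AddCommGroup M] [Module K M] [AddCommGroup N] [Module K N]
    [AddCommGroup P] [Module K P] (μ : M →ₗ[K] N →ₗ[K] P) :
    ((X → M) ⊗[K] N) →ₗ[K] (X → P) :=
  TensorProduct.lift <| LinearMap.mk₂ K (fun c r x => μ (c x) r)
    (fun c c' r => by funext x; simp)
    (fun s c r => by funext x; simp)
    (fun c r r' => by funext x; simp)
    (fun c r r' => by funext x; simp)

open Topology TensorProduct

theorem LinearIndependent.finite_preimage_subtype_val {B M : Type*} [Field B] [AddCommGroup M]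
    [Module B M] {T : Set M} (hT : LinearIndependent B ((↑) : T → M)) (p : Submodule B M)
    [FiniteDimensional B p] : (Subtype.val ⁻¹' T : Set p).Finite := by
  refine LinearIndependent.set_finite_of_isNoetherian (LinearIndependent.of_comp p.subtype ?_)
  exact hT.comp (fun x : (Subtype.val ⁻¹' T : Set p) => (⟨x.1.1, x.2⟩ : T)) fun x y hxy =>
    Subtype.ext <| Subtype.ext congr(($hxy : M))

theorem Submodule.FG.exists_le_supported {R ι M : Type*} [Semiring R] [AddCommMonoid M]
    [Module R M] {q : Submodule R (ι →₀ M)} (hq : q.FG) :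
    ∃ s : Finset ι, q ≤ Finsupp.supported M R ↑s := by
  classical
  obtain ⟨S, rfl⟩ := hq
  exact ⟨S.sup Finsupp.support, Submodule.span_le.2 fun v hv =>
    Finsupp.supported_mono (Finset.coe_subset.2 (Finset.le_sup (f := Finsupp.support) hv))
      (Finsupp.mem_supported_support R v)⟩

section IndLimTopology

variable {B : Type*} [Field B] [TopologicalSpace B]
  {M N : Type*} [AddCommGroup M] [Module B M] [AddCommGroup N] [Module B N]

theorem LinearMap.continuous_canonicalFDTopology [IsTopologicalRing B]
    [FiniteDimensional B M] [FiniteDimensional B N] (φ : M →ₗ[B] N) :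
    Continuous[canonicalFDTopology B M, canonicalFDTopology B N] φ := by
  let e := (Module.finBasis B M).equivFun
  let e' := (Module.finBasis B N).equivFun
  have hφ : ⇑e' ∘ ⇑φ = ⇑(e'.toLinearMap ∘ₗ φ ∘ₗ e.symm.toLinearMap) ∘ ⇑e := by
    ext x; simp
  refine continuous_induced_rng.2 ?_
  rw [hφ]
  exact @Continuous.comp _ _ _ (canonicalFDTopology B M) _ _ _ _
    (LinearMap.continuous_on_pi _) continuous_induced_dom

theorem continuousAdd_canonicalFDTopology [IsTopologicalRing B] [FiniteDimensional B M] :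
    @ContinuousAdd M (canonicalFDTopology B M) _ :=
  @IsTopologicalAddGroup.toContinuousAdd _ _ _ <|
    topologicalAddGroup_induced (Module.finBasis B M).equivFun

theorem t1Space_canonicalFDTopology [T1Space B] [FiniteDimensional B M] :
    @T1Space M (canonicalFDTopology B M) :=
  @Topology.IsEmbedding.t1Space _ _ (canonicalFDTopology B M) _ _ _
    (Module.finBasis B M).equivFun.injective.isEmbedding_induced

theorem continuous_indLimTopology_dom {Y : Type*} [TopologicalSpace Y] {g : M → Y}
    (hg : ∀ (p : Submodule B M) [FiniteDimensional B p],
      Continuous[canonicalFDTopology B p, _] (g ∘ Subtype.val)) :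
    Continuous[indLimTopology B M, _] g :=
  continuous_iSup_dom.2 fun p => continuous_iSup_dom.2 fun _ =>
    continuous_coinduced_dom.2 (hg p)

theorem continuous_subtype_val_indLimTopology (p : Submodule B M) [FiniteDimensional B p] :
    Continuous[canonicalFDTopology B p, indLimTopology B M] Subtype.val :=
  continuous_iff_coinduced_le.2 <| le_iSup₂_of_le p ‹_› le_rfl

theorem isClosed_indLimTopology_of_finite [T1Space B] {S : Set M}
    (hS : ∀ (p : Submodule B M) [FiniteDimensional B p], (Subtype.val ⁻¹' S : Set p).Finite) :
    IsClosed[indLimTopology B M] S :=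
  isClosed_iSup_iff.2 fun p => isClosed_iSup_iff.2 fun _ => isClosed_coinduced.2 <|
    @Set.Finite.isClosed _ (canonicalFDTopology B p) t1Space_canonicalFDTopology _ (hS p)

theorem IsCompact.exists_finiteDimensional_subset [T1Space B] {S : Set M}
    (hS : @IsCompact M (indLimTopology B M) S) :
    ∃ p : Submodule B M, FiniteDimensional B p ∧ S ⊆ p := by
  obtain ⟨T, hTS, hspan, hT⟩ := exists_linearIndependent B S
  suffices hfin : T.Finite from
    ⟨Submodule.span B S, hspan ▸ FiniteDimensional.span_of_finite B hfin, Submodule.subset_span⟩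
  have hclosed : ∀ U ⊆ T, IsClosed[indLimTopology B M] U := fun U hU =>
    isClosed_indLimTopology_of_finite fun p _ =>
      (hT.finite_preimage_subtype_val p).subset (Set.preimage_mono hU)
  let := indLimTopology B M
  exact (hS.of_isClosed_subset (hclosed T subset_rfl) hTS).finite <|
    isDiscrete_iff_forall_mem_exists_isClosed.2 fun U hU =>
      ⟨U, hclosed U hU, Set.inter_eq_left.2 hU⟩

theorem Continuous.exists_finiteDimensional_range_subset [T1Space B] {X : Type*}
    [TopologicalSpace X] [CompactSpace X] {f : X → M} (hf : Continuous[_, indLimTopology B M] f) :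
    ∃ p : Submodule B M, FiniteDimensional B p ∧ ∀ x, f x ∈ p := by
  obtain ⟨p, hp, hfp⟩ :=
    (@isCompact_range _ _ _ (indLimTopology B M) _ _ hf).exists_finiteDimensional_subset
  exact ⟨p, hp, fun x => hfp ⟨x, rfl⟩⟩

variable [IsTopologicalRing B]

theorem LinearMap.continuous_indLimTopology (φ : M →ₗ[B] N) :
    Continuous[indLimTopology B M, indLimTopology B N] φ := by
  let := indLimTopology B N
  refine continuous_indLimTopology_dom fun p _ => ?_
  let ψ : p →ₗ[B] p.map φ := φ.restrict fun _ => Submodule.mem_map_of_mem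
  exact @Continuous.comp _ _ _ (canonicalFDTopology B p) (canonicalFDTopology B (p.map φ)) _ _ _
    (continuous_subtype_val_indLimTopology _) ψ.continuous_canonicalFDTopology

theorem LinearEquiv.image_comp_setOf_continuous_indLimTopology {X : Type*} [TopologicalSpace X]
    (e : M ≃ₗ[B] N) :
    (fun f : X → M => ⇑e ∘ f) '' {f | Continuous[_, indLimTopology B M] f} =
      {g | Continuous[_, indLimTopology B N] g} := by
  refine Set.Subset.antisymm ?_ fun g hg => ⟨e.symm ∘ g, ?_, ?_⟩
  · rintro _ ⟨f, hf, rfl⟩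
    exact @Continuous.comp _ _ _ _ (indLimTopology B M) (indLimTopology B N) _ _
      e.toLinearMap.continuous_indLimTopology hf
  · exact @Continuous.comp _ _ _ _ (indLimTopology B N) (indLimTopology B M) _ _
      e.symm.toLinearMap.continuous_indLimTopology hg
  · ext x
    simp

theorem LinearMap.continuous_indLimTopology_canonicalFDTopology [FiniteDimensional B N]
    (φ : M →ₗ[B] N) :
    Continuous[indLimTopology B M, canonicalFDTopology B N] φ := by
  let := canonicalFDTopology B N
  exact continuous_indLimTopology_dom fun p _ => (φ ∘ₗ p.subtype).continuous_canonicalFDTopology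

theorem Continuous.codRestrict_canonicalFDTopology {X : Type*} [TopologicalSpace X] {f : X → M}
    (hf : Continuous[_, indLimTopology B M] f) (p : Submodule B M) [FiniteDimensional B p]
    (hfp : ∀ x, f x ∈ p) :
    Continuous[_, canonicalFDTopology B p] (Set.codRestrict f p hfp) := by
  obtain ⟨π, hπ⟩ := p.subtype.exists_leftInverse_of_injective p.ker_subtype
  have hf' : Set.codRestrict f p hfp = π ∘ f := by
    ext x
    simpa using congr(($hπ ⟨f x, hfp x⟩ : M)).symm
  rw [hf']
  exact @Continuous.comp _ _ _ _ (indLimTopology B M) (canonicalFDTopology B p) _ _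
    π.continuous_indLimTopology_canonicalFDTopology hf

/-- The inductive-limit topology need not make addition on `M × M` continuous; compactness of
`X` puts both maps into one finite-dimensional subspace, where it is. -/
theorem Continuous.add_indLimTopology [T1Space B] {X : Type*} [TopologicalSpace X] [CompactSpace X]
    {f g : X → M} (hf : Continuous[_, indLimTopology B M] f)
    (hg : Continuous[_, indLimTopology B M] g) : Continuous[_, indLimTopology B M] (f + g) := by
  obtain ⟨p, _, hfp⟩ := hf.exists_finiteDimensional_range_subset
  obtain ⟨q, _, hgq⟩ := hg.exists_finiteDimensional_range_subset
  have hf' := hf.codRestrict_canonicalFDTopology (p ⊔ q) fun x => Submodule.mem_sup_left (hfp x)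
  have hg' := hg.codRestrict_canonicalFDTopology (p ⊔ q) fun x => Submodule.mem_sup_right (hgq x)
  let := canonicalFDTopology B ↥(p ⊔ q)
  have := continuousAdd_canonicalFDTopology (B := B) (M := ↥(p ⊔ q))
  exact @Continuous.comp _ _ _ _ (canonicalFDTopology B ↥(p ⊔ q)) (indLimTopology B M) _ _
    (continuous_subtype_val_indLimTopology _) (hf'.add hg')

variable (B M) in
def indLimContinuousSubmodule [T1Space B] (X : Type*) [TopologicalSpace X] [CompactSpace X] :
    Submodule B (X → M) where
  carrier := {f | Continuous[_, indLimTopology B M] f}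
  add_mem' := Continuous.add_indLimTopology
  zero_mem' := @continuous_const _ _ _ (indLimTopology B M) 0
  smul_mem' c _ hf := @Continuous.comp _ _ _ _ (indLimTopology B M) (indLimTopology B M) _ _
    (LinearMap.lsmul B M c).continuous_indLimTopology hf

end IndLimTopology

section PointwiseTensorMap

variable {K : Type*} [CommRing K] {X M N : Type*} [AddCommGroup M] [Module K M]
  [AddCommGroup N] [Module K N]

theorem equivFinsuppOfBasisRight_pointwiseTensorMap_mk {ι : Type*} [DecidableEq ι]
    (b : Module.Basis ι K N) (t : (X → M) ⊗[K] N) (x : X) (i : ι) :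
    equivFinsuppOfBasisRight b (pointwiseTensorMap K X (mk K M N) t x) i =
      equivFinsuppOfBasisRight b t i x := by
  induction t using TensorProduct.induction_on with
  | zero => simp
  | tmul c r => simp [pointwiseTensorMap]
  | add t t' ht ht' => simp [ht, ht']

theorem pointwiseTensorMap_mk_injective [Module.Free K N] :
    Function.Injective (pointwiseTensorMap K X (mk K M N)) := by
  classical
  let b := Module.Free.chooseBasis K N
  intro t t' h
  apply (equivFinsuppOfBasisRight b).injective
  ext i x
  simp only [← equivFinsuppOfBasisRight_pointwiseTensorMap_mk, h]

variable {B : Type*} [Field B] [Algebra K B] [Module B M] [IsScalarTower K B M]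

theorem equivFinsuppOfBasisRight_smul {ι : Type*} [DecidableEq ι] (b : Module.Basis ι K N)
    (s : B) (t : M ⊗[K] N) :
    equivFinsuppOfBasisRight b (s • t) = s • equivFinsuppOfBasisRight b t := by
  induction t using TensorProduct.induction_on with
  | zero => simp
  | tmul m r =>
    ext i
    simp [smul_tmul', smul_comm s]
  | add t t' ht ht' => simp [ht, ht']

variable [TopologicalSpace B] [IsTopologicalRing B] [T1Space B] [TopologicalSpace X]
  [CompactSpace X]

theorem Continuous.exists_eq_pointwiseTensorMap_sum {ι : Type*} [DecidableEq ι]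
    (b : Module.Basis ι K N) {f : X → M ⊗[K] N}
    (hf : Continuous[_, indLimTopology B (M ⊗[K] N)] f) :
    ∃ (s : Finset ι) (c : ι → X → M), (∀ i, Continuous[_, indLimTopology B M] (c i)) ∧
      f = pointwiseTensorMap K X (TensorProduct.mk K M N) (∑ i ∈ s, c i ⊗ₜ b i) := by
  let E : M ⊗[K] N ≃ₗ[B] ι →₀ M :=
    { equivFinsuppOfBasisRight b with map_smul' := equivFinsuppOfBasisRight_smul b }
  obtain ⟨p, hp, hfp⟩ := hf.exists_finiteDimensional_range_subset
  obtain ⟨s, hs⟩ := ((Module.Finite.iff_fg.1 hp).map E.toLinearMap).exists_le_supported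
  refine ⟨s, fun i x => E (f x) i, fun i => @Continuous.comp _ _ _ _
    (indLimTopology B (M ⊗[K] N)) (indLimTopology B M) _ _
    (Finsupp.lapply i ∘ₗ E.toLinearMap).continuous_indLimTopology hf, ?_⟩
  ext x
  have hsupp : (E (f x)).support ⊆ s :=
    (Finsupp.mem_supported _ _).1 (hs (Submodule.mem_map_of_mem (hfp x)))
  calc f x = E.symm (E (f x)) := (E.symm_apply_apply _).symm
    _ = ∑ i ∈ s, E (f x) i ⊗ₜ b i :=
      (equivFinsuppOfBasisRight_symm_apply b _).trans
        (Finsupp.sum_of_support_subset _ hsupp _ fun _ _ => zero_tmul _ _)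
    _ = _ := by simp [map_sum, pointwiseTensorMap]

theorem pointwiseTensorMap_mk_image_span_continuous [Module.Free K N] :
    pointwiseTensorMap K X (mk K M N) '' (Submodule.span K {t : (X → M) ⊗[K] N |
      ∃ (c : X → M) (r : N), Continuous[_, indLimTopology B M] c ∧ t = c ⊗ₜ r} : Set _) =
    {f | Continuous[_, indLimTopology B (M ⊗[K] N)] f} := by
  refine Set.Subset.antisymm (Set.image_subset_iff.2 <| Submodule.span_le (p :=
    ((indLimContinuousSubmodule B (M ⊗[K] N) X).restrictScalars K).comap
      (pointwiseTensorMap K X (mk K M N))).2 ?_) fun f hf => ?_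
  · rintro _ ⟨c, r, hc, rfl⟩
    exact @Continuous.comp _ _ _ _ (indLimTopology B M) (indLimTopology B (M ⊗[K] N)) _ _
      ((AlgebraTensorModule.mk K B M N).flip r).continuous_indLimTopology hc
  · classical
    obtain ⟨s, c, hc, rfl⟩ := hf.exists_eq_pointwiseTensorMap_sum (Module.Free.chooseBasis K N)
    exact ⟨_, Submodule.sum_mem _ fun i _ => Submodule.subset_span ⟨c i, _, hc i, rfl⟩, rfl⟩

end PointwiseTensorMap

theorem continuous_cochains_base_change_general
    {K B : Type*} [Field K] [Field B] [Algebra K B] [UniformSpace B]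
    [T2Space B] [IsTopologicalRing B]
    {G : Type*} [TopologicalSpace G] [CompactSpace G]
    (V : Type*) [AddCommGroup V] [Module K V]
    (R : Type*) [CommRing R] [Algebra K R] (n : ℕ) :
    ∀ Φ : (((Fin n → G) → B ⊗[K] V) ⊗[K] R) →ₗ[K] ((Fin n → G) → B ⊗[K] (V ⊗[K] R)),
      Φ = pointwiseTensorMap K (Fin n → G)
            (LinearMap.compr₂ (TensorProduct.mk K (B ⊗[K] V) R)
              (TensorProduct.assoc K B V R).toLinearMap) →
      Set.InjOn Φ
        (Submodule.span K {t : ((Fin n → G) → B ⊗[K] V) ⊗[K] R |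
          ∃ c : (Fin n → G) → B ⊗[K] V, ∃ r : R,
            (@Continuous _ _ Pi.topologicalSpace (indLimTopology B (B ⊗[K] V)) c) ∧
            t = c ⊗ₜ[K] r} : Set _) ∧
      Φ '' (Submodule.span K {t : ((Fin n → G) → B ⊗[K] V) ⊗[K] R |
          ∃ c : (Fin n → G) → B ⊗[K] V, ∃ r : R,
            (@Continuous _ _ Pi.topologicalSpace (indLimTopology B (B ⊗[K] V)) c) ∧
            t = c ⊗ₜ[K] r} : Set _)
        = {f : (Fin n → G) → B ⊗[K] (V ⊗[K] R) |
            @Continuous _ _ Pi.topologicalSpace (indLimTopology B (B ⊗[K] (V ⊗[K] R))) f} := by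
  rintro Φ rfl
  let A := AlgebraTensorModule.assoc K K B B V R
  have hΦ : ⇑(pointwiseTensorMap K (Fin n → G) ((mk K (B ⊗[K] V) R).compr₂
      (TensorProduct.assoc K B V R).toLinearMap)) =
      (fun f => ⇑A ∘ f) ∘ pointwiseTensorMap K (Fin n → G) (mk K (B ⊗[K] V) R) := by
    funext t
    induction t using TensorProduct.induction_on with
    | zero => simp
    | tmul c r => rfl
    | add t t' ht ht' => simp [ht, ht']
  rw [hΦ, Set.image_comp, pointwiseTensorMap_mk_image_span_continuous]
  exact ⟨(A.injective.comp_left.comp pointwiseTensorMap_mk_injective).injOn,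
    LinearEquiv.image_comp_setOf_continuous_indLimTopology (M := (B ⊗[K] V) ⊗[K] R)
      (N := B ⊗[K] (V ⊗[K] R)) A⟩

/-- Let `G` be a compact topological group, `B` a complete
Hausdorff topological field of characteristic zero containing `K`, `V` a
finite-dimensional `K`-vector space, `R` a `K`-algebra, `n ≥ 0`.  Give
`V(B) = B ⊗ V` and `V(B ⊗ R) = B ⊗ (V ⊗ R)` the inductive limit topology as
`B`-vector spaces.  Then the natural map
`Cⁿ(G, V ⊗ B) ⊗_K R → Cⁿ(G, V ⊗ B ⊗ R)` from continuous cochains tensored with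
`R` to continuous cochains with values in `V ⊗ B ⊗ R` is a bijection: it is
injective on the span of the pure tensors `c ⊗ r` with `c` continuous, and the
image of that span is exactly the set of continuous cochains. -/
theorem continuous_cochains_base_change
    {K B : Type*} [Field K] [Field B] [Algebra K B] [UniformSpace B] [CompleteSpace B]
    [T2Space B] [IsTopologicalRing B] [CharZero B]
    {G : Type*} [Group G] [TopologicalSpace G] [IsTopologicalGroup G] [CompactSpace G]
    (V : Type*) [AddCommGroup V] [Module K V] [FiniteDimensional K V]
    (R : Type*) [CommRing R] [Algebra K R] (n : ℕ) :
    ∀ Φ : (((Fin n → G) → B ⊗[K] V) ⊗[K] R) →ₗ[K] ((Fin n → G) → B ⊗[K] (V ⊗[K] R)),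
      Φ = pointwiseTensorMap K (Fin n → G)
            (LinearMap.compr₂ (TensorProduct.mk K (B ⊗[K] V) R)
              (TensorProduct.assoc K B V R).toLinearMap) →
      Set.InjOn Φ
        (Submodule.span K {t : ((Fin n → G) → B ⊗[K] V) ⊗[K] R |
          ∃ c : (Fin n → G) → B ⊗[K] V, ∃ r : R,
            (@Continuous _ _ Pi.topologicalSpace (indLimTopology B (B ⊗[K] V)) c) ∧
            t = c ⊗ₜ[K] r} : Set _) ∧
      Φ '' (Submodule.span K {t : ((Fin n → G) → B ⊗[K] V) ⊗[K] R |
          ∃ c : (Fin n → G) → B ⊗[K] V, ∃ r : R,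
            (@Continuous _ _ Pi.topologicalSpace (indLimTopology B (B ⊗[K] V)) c) ∧
            t = c ⊗ₜ[K] r} : Set _)
        = {f : (Fin n → G) → B ⊗[K] (V ⊗[K] R) |
            @Continuous _ _ Pi.topologicalSpace (indLimTopology B (B ⊗[K] (V ⊗[K] R))) f} :=
  continuous_cochains_base_change_general V R n
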